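/- Let D₁ and D₂ be derivations of the Lie algebra rh₃ = h₃ × ℝ such that D₁ and D₂ commute (D₁ ∘ D₂ = D₂ ∘ D₁), both D₁ and D₂ are semisimple as endomorphisms of the underlying 4-dimensional real vector space, and both have characteristic polynomial X³(X − 1). Then D₁ = D₂. -/

import Mathlib

set_option linter.unusedTactic false
set_option linter.unnecessarySeqFocus false
set_option linter.unreachableTactic false

open Polynomial

/-- The 3-dimensional Heisenberg Lie algebra `h₃`: the real vector space `Fin 3 → ℝ`
with basis `e₁, e₂, e₃` and only nonzero bracket `⁅e₁, e₂⁆ = e₃`. -/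
def H3 : Type := Fin 3 → ℝ

noncomputable instance : AddCommGroup H3 := Pi.addCommGroup
noncomputable instance : Module ℝ H3 := Pi.module _ _ _
instance : FiniteDimensional ℝ H3 := inferInstanceAs (FiniteDimensional ℝ (Fin 3 → ℝ))

lemma H3.add_apply (x y : H3) (i : Fin 3) : (x + y) i = x i + y i := rfl
lemma H3.smul_apply (r : ℝ) (x : H3) (i : Fin 3) : (r • x) i = r * x i := rfl

noncomputable instance : LieRing H3 :=
  { (inferInstance : AddCommGroup H3) with
    bracket := fun x y => ![0, 0, x 0 * y 1 - x 1 * y 0]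
    add_lie := by
      intro x y z
      show (![_,_,_] : Fin 3 → ℝ) = ![_,_,_] + ![_,_,_]
      funext i
      fin_cases i <;> simp [H3.add_apply] <;> erw [H3.add_apply] <;> simp <;> ring
    lie_add := by
      intro x y z
      show (![_,_,_] : Fin 3 → ℝ) = ![_,_,_] + ![_,_,_]
      funext i
      fin_cases i <;> simp [H3.add_apply] <;> erw [H3.add_apply] <;> simp <;> ring
    lie_self := by
      intro x
      show (![_,_,_] : Fin 3 → ℝ) = 0
      funext i
      fin_cases i <;> simp <;> ring
    leibniz_lie := by
      intro x y z
      show (![_,_,_] : Fin 3 → ℝ) = ![_,_,_] + ![_,_,_]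
      funext i
      fin_cases i <;> simp [H3.add_apply] <;> erw [H3.add_apply] <;> simp <;> ring }

noncomputable instance : LieAlgebra ℝ H3 :=
  { lie_smul := by
      intro r x y
      show (![_,_,_] : Fin 3 → ℝ) = r • ![_,_,_]
      funext i
      fin_cases i <;> simp [H3.smul_apply] <;> erw [H3.smul_apply] <;> simp <;> ring }

/-- `rh₃ := h₃ × ℝ`, the product Lie algebra of the Heisenberg Lie algebra `h₃` with the
1-dimensional abelian Lie algebra `ℝ`. -/
def RH3 : Type := H3 × ℝ

noncomputable instance : AddCommGroup RH3 := inferInstanceAs (AddCommGroup (H3 × ℝ))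
noncomputable instance : Module ℝ RH3 := inferInstanceAs (Module ℝ (H3 × ℝ))
instance : FiniteDimensional ℝ RH3 := inferInstanceAs (FiniteDimensional ℝ (H3 × ℝ))

noncomputable instance : LieRing RH3 :=
  { (inferInstance : AddCommGroup RH3) with
    bracket := fun x y => (⁅x.1, y.1⁆, 0)
    add_lie := by
      intro x y z
      show (⁅x.1 + y.1, z.1⁆, (0:ℝ)) = (⁅x.1, z.1⁆ + ⁅y.1, z.1⁆, 0 + 0)
      simp [add_lie]
    lie_add := by
      intro x y z
      show (⁅x.1, y.1 + z.1⁆, (0:ℝ)) = (⁅x.1, y.1⁆ + ⁅x.1, z.1⁆, 0 + 0)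
      simp [lie_add]
    lie_self := by
      intro x
      show (⁅x.1, x.1⁆, (0:ℝ)) = (0, 0)
      simp
    leibniz_lie := by
      intro x y z
      show (⁅x.1, ⁅y.1, z.1⁆⁆, (0:ℝ)) = (⁅⁅x.1, y.1⁆, z.1⁆ + ⁅y.1, ⁅x.1, z.1⁆⁆, 0 + 0)
      rw [← leibniz_lie]
      simp }

noncomputable instance : LieAlgebra ℝ RH3 :=
  { lie_smul := by
      intro r x y
      show (⁅x.1, r • y.1⁆, (0:ℝ)) = (r • ⁅x.1, y.1⁆, r • (0:ℝ))
      simp }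

/-! A semisimple endomorphism with characteristic polynomial `X³ (X - 1)` is an idempotent of
rank one. For a derivation `D` of `rh₃`, the Leibniz rule on `⁅e₁, e₂⁆ = e₃` gives
`D e₃ = λ e₃` with `λ = (D e₁)₁ + (D e₂)₂`, and `D e₄` is central, say `D e₄ = t e₃ + u e₄`.
If `D` is idempotent then `λ, u ∈ {0, 1}`, while its trace is `2λ + u = 1`; so `D e₃ = 0` and
`u = 1`. For two such derivations this gives `D₁ D₂ e₄ = D₁ e₄ ≠ 0`. Commuting rank-one
idempotents with nonzero product have the same range, and commuting idempotents with the same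
range are equal. -/

namespace Module.End

open LinearMap

section Idempotent

variable {R M : Type*} [Semiring R] [AddCommMonoid M] [Module R M]

theorem eq_of_commute_of_range_eq {P Q : End R M} (hP : IsIdempotentElem P)
    (hQ : IsIdempotentElem Q) (hPQ : Commute P Q) (h : range P = range Q) : P = Q :=
  calc P = Q * P := ((IsIdempotentElem.comp_eq_right_iff hQ P).mpr h.le).symm
    _ = P * Q := hPQ.eq.symm
    _ = Q := (IsIdempotentElem.comp_eq_right_iff hP Q).mpr h.ge

end Idempotent

section DivisionRing

variable {K V : Type*} [DivisionRing K] [AddCommGroup V] [Module K V] [FiniteDimensional K V]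

theorem range_mul_eq_of_finrank_range_eq_one {P Q : End K V}
    (hP : Module.finrank K (range P) = 1) (hPQ : P * Q ≠ 0) : range (P * Q) = range P := by
  refine Submodule.eq_of_le_of_finrank_eq (range_comp_le_range Q P) (le_antisymm ?_ ?_)
  · exact hP ▸ Submodule.finrank_mono (range_comp_le_range Q P)
  · rw [hP, Nat.one_le_iff_ne_zero, Ne, Submodule.finrank_eq_zero, range_eq_bot]
    exact hPQ

theorem eq_of_commute_of_finrank_range_eq_one {P Q : End K V} (hP : IsIdempotentElem P)
    (hQ : IsIdempotentElem Q) (hP₁ : Module.finrank K (range P) = 1)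
    (hQ₁ : Module.finrank K (range Q) = 1) (hPQ : Commute P Q) (hne : P * Q ≠ 0) : P = Q := by
  refine eq_of_commute_of_range_eq hP hQ hPQ ?_
  rw [← range_mul_eq_of_finrank_range_eq_one hP₁ hne, hPQ.eq,
    range_mul_eq_of_finrank_range_eq_one hQ₁ (hPQ.eq ▸ hne)]

end DivisionRing

variable {K V : Type*} [Field K] [AddCommGroup V] [Module K V] [FiniteDimensional K V]

theorem isIdempotentElem_of_isSemisimple_of_charpoly_eq {f : End K V} (hss : f.IsSemisimple)
    {n : ℕ} (hc : f.charpoly = X ^ n * (X - 1)) : IsIdempotentElem f := by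
  have hdvd : minpoly K f ∣ (X * (X - 1)) ^ n.succ := by
    refine (minpoly_dvd_charpoly f).trans ?_
    rw [hc, mul_pow]
    exact mul_dvd_mul (pow_dvd_pow _ n.le_succ) (dvd_pow_self _ n.succ_ne_zero)
  obtain ⟨g, hg⟩ := (hss.minpoly_squarefree.dvd_pow_iff_dvd n.succ_ne_zero).mp hdvd
  have : aeval f (X * (X - 1) : K[X]) = 0 := by rw [hg, map_mul, minpoly.aeval, zero_mul]
  simpa [IsIdempotentElem, mul_sub, sub_eq_zero] using this

theorem trace_eq_one_of_charpoly_eq {f : End K V} {n : ℕ} (hc : f.charpoly = X ^ n * (X - 1)) :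
    trace K V f = 1 := by
  rw [← C_1] at hc
  rw [trace_eq_sum_roots_charpoly_of_splits (hc ▸ (Splits.X_pow n).mul (Splits.X_sub_C 1)), hc,
    roots_mul (mul_ne_zero (pow_ne_zero n X_ne_zero) (X_sub_C_ne_zero 1)), roots_X_pow,
    roots_X_sub_C]
  simp [Multiset.sum_nsmul]

theorem finrank_range_eq_one_of_trace_eq_one [CharZero K] {f : End K V} (hf : IsIdempotentElem f)
    (htr : trace K V f = 1) : Module.finrank K (range f) = 1 := by
  exact_mod_cast hf.isProj_range.trace.symm.trans htr

end Module.End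

namespace RH3

@[simp] lemma fst_add_apply (x y : RH3) (i : Fin 3) : (x + y).1 i = x.1 i + y.1 i := rfl
@[simp] lemma snd_add (x y : RH3) : (x + y).2 = x.2 + y.2 := rfl
@[simp] lemma fst_smul_apply (r : ℝ) (x : RH3) (i : Fin 3) : (r • x).1 i = r * x.1 i := rfl
@[simp] lemma snd_smul (r : ℝ) (x : RH3) : (r • x).2 = r * x.2 := rfl
@[simp] lemma fst_zero_apply (i : Fin 3) : (0 : RH3).1 i = 0 := rfl
@[simp] lemma snd_zero : (0 : RH3).2 = 0 := rfl
@[simp] lemma fst_lie (x y : RH3) :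
    (⁅x, y⁆.1 : Fin 3 → ℝ) = ![0, 0, x.1 0 * y.1 1 - x.1 1 * y.1 0] := rfl
@[simp] lemma snd_lie (x y : RH3) : ⁅x, y⁆.2 = 0 := rfl

noncomputable def e₁ : RH3 := ((![1, 0, 0] : H3), 0)
noncomputable def e₂ : RH3 := ((![0, 1, 0] : H3), 0)
noncomputable def e₃ : RH3 := ((![0, 0, 1] : H3), 0)
noncomputable def e₄ : RH3 := ((![0, 0, 0] : H3), 1)

@[simp] lemma fst_e₁ : (e₁.1 : Fin 3 → ℝ) = ![1, 0, 0] := rfl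
@[simp] lemma fst_e₂ : (e₂.1 : Fin 3 → ℝ) = ![0, 1, 0] := rfl
@[simp] lemma fst_e₃ : (e₃.1 : Fin 3 → ℝ) = ![0, 0, 1] := rfl
@[simp] lemma fst_e₄ : (e₄.1 : Fin 3 → ℝ) = ![0, 0, 0] := rfl
@[simp] lemma snd_e₁ : e₁.2 = 0 := rfl
@[simp] lemma snd_e₂ : e₂.2 = 0 := rfl
@[simp] lemma snd_e₃ : e₃.2 = 0 := rfl
@[simp] lemma snd_e₄ : e₄.2 = 1 := rfl

lemma ext_iff {x y : RH3} :
    x = y ↔ x.1 0 = y.1 0 ∧ x.1 1 = y.1 1 ∧ x.1 2 = y.1 2 ∧ x.2 = y.2 := by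
  refine ⟨by rintro rfl; simp, fun ⟨h₀, h₁, h₂, h₃⟩ => Prod.ext (funext fun i => ?_) h₃⟩
  fin_cases i <;> assumption

lemma lie_eq_smul_e₃ (x y : RH3) : ⁅x, y⁆ = (x.1 0 * y.1 1 - x.1 1 * y.1 0) • e₃ := by
  simp [ext_iff]

lemma eq_smul_e₃_add_smul_e₄ {x : RH3} (h₀ : x.1 0 = 0) (h₁ : x.1 1 = 0) :
    x = x.1 2 • e₃ + x.2 • e₄ := by
  simp [ext_iff, h₀, h₁]

lemma e₃_ne_zero : e₃ ≠ 0 := fun h => by simpa using congrArg (fun x : RH3 => x.1 2) h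

noncomputable def basis : Module.Basis (Fin 3 ⊕ Unit) ℝ RH3 :=
  (Pi.basisFun ℝ (Fin 3)).prod (Module.Basis.singleton Unit ℝ)

lemma basis_repr_inl (x : RH3) (i : Fin 3) : basis.repr x (Sum.inl i) = x.1 i :=
  Module.Basis.prod_repr_inl _ _ x i

lemma basis_repr_inr (x : RH3) (u : Unit) : basis.repr x (Sum.inr u) = x.2 :=
  (Module.Basis.prod_repr_inr _ _ x u).trans (by simp)

lemma fst_basis_inl (i j : Fin 3) : (basis (Sum.inl i)).1 j = Pi.single (M := fun _ => ℝ) i 1 j :=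
  congrFun (Module.Basis.prod_apply_inl_fst (Pi.basisFun ℝ (Fin 3)) (Module.Basis.singleton Unit ℝ)
    i) j |>.trans (by rw [Pi.basisFun_apply])

lemma snd_basis_inl (i : Fin 3) : (basis (Sum.inl i)).2 = 0 :=
  Module.Basis.prod_apply_inl_snd (Pi.basisFun ℝ (Fin 3)) (Module.Basis.singleton Unit ℝ) i

lemma fst_basis_inr (u : Unit) (j : Fin 3) : (basis (Sum.inr u)).1 j = 0 :=
  congrFun (Module.Basis.prod_apply_inr_fst (Pi.basisFun ℝ (Fin 3))
    (Module.Basis.singleton Unit ℝ) u) j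

lemma snd_basis_inr (u : Unit) : (basis (Sum.inr u)).2 = 1 :=
  (Module.Basis.prod_apply_inr_snd (Pi.basisFun ℝ (Fin 3)) (Module.Basis.singleton Unit ℝ) u).trans
    (Module.Basis.singleton_apply _ _ _)

lemma trace_eq (f : Module.End ℝ RH3) :
    LinearMap.trace ℝ RH3 f = (f e₁).1 0 + (f e₂).1 1 + (f e₃).1 2 + (f e₄).2 := by
  have h₁ : basis (Sum.inl 0) = e₁ := by simp [ext_iff, fst_basis_inl, snd_basis_inl]
  have h₂ : basis (Sum.inl 1) = e₂ := by simp [ext_iff, fst_basis_inl, snd_basis_inl]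
  have h₃ : basis (Sum.inl 2) = e₃ := by simp [ext_iff, fst_basis_inl, snd_basis_inl]
  have h₄ : basis (Sum.inr ()) = e₄ := by simp [ext_iff, fst_basis_inr, snd_basis_inr]
  rw [LinearMap.trace_eq_matrix_trace ℝ basis, Matrix.trace, Fintype.sum_sum_type,
    Fin.sum_univ_three, Fintype.sum_unique]
  simp only [Matrix.diag, LinearMap.toMatrix_apply, basis_repr_inl, basis_repr_inr]
  rw [h₁, h₂, h₃, ← h₄]

variable (D : LieDerivation ℝ RH3 RH3)

lemma apply_e₃ : D e₃ = ((D e₁).1 0 + (D e₂).1 1) • e₃ := by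
  have h := D.apply_lie_eq_add e₁ e₂
  rw [lie_eq_smul_e₃, lie_eq_smul_e₃, lie_eq_smul_e₃] at h
  simpa [add_smul, add_comm] using h

lemma apply_e₄ : D e₄ = (D e₄).1 2 • e₃ + (D e₄).2 • e₄ := by
  have h (y : RH3) : ⁅D e₄, y⁆ = 0 := by
    simpa [lie_eq_smul_e₃] using (D.apply_lie_eq_add e₄ y).symm
  refine eq_smul_e₃_add_smul_e₄ ?_ ?_
  · simpa [lie_eq_smul_e₃, e₃_ne_zero] using h e₂
  · simpa [lie_eq_smul_e₃, e₃_ne_zero] using h e₁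

lemma apply_e₃_eq_zero_and_snd_apply_e₄_eq_one (hD : IsIdempotentElem D.toLinearMap)
    (htr : LinearMap.trace ℝ RH3 D = 1) : D e₃ = 0 ∧ (D e₄).2 = 1 := by
  obtain ⟨l, hl⟩ : ∃ l, (D e₁).1 0 + (D e₂).1 1 = l := ⟨_, rfl⟩
  have h₃ : D e₃ = l • e₃ := hl ▸ apply_e₃ D
  have hidem (x : RH3) : D (D x) = D x := LinearMap.congr_fun hD x
  have hll : l * l = l := by
    simpa [h₃] using congrArg (fun x : RH3 => x.1 2) (hidem e₃)
  have huu : (D e₄).2 * (D e₄).2 = (D e₄).2 := by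
    have h := congrArg Prod.snd (hidem e₄)
    rw [apply_e₄ D] at h
    simpa [h₃] using h
  have htr' : l + l + (D e₄).2 = 1 := by
    rw [trace_eq] at htr
    simpa [h₃, ← hl, add_assoc] using htr
  have hl₀ : l = 0 := by nlinarith
  exact ⟨by rw [h₃, hl₀, zero_smul], by linarith⟩

end RH3

/-- If `D₁` and `D₂` are commuting derivations of `rh₃ = h₃ × ℝ`, both semisimple as
endomorphisms of the underlying 4-dimensional real vector space, and both with
characteristic polynomial `X³ * (X - 1)`, then `D₁ = D₂`. -/
theorem derivation_rh3_semisimple_unique (D₁ D₂ : LieDerivation ℝ RH3 RH3)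
    (hcomm : D₁.toLinearMap ∘ₗ D₂.toLinearMap = D₂.toLinearMap ∘ₗ D₁.toLinearMap)
    (hss₁ : Module.End.IsSemisimple (D₁.toLinearMap : Module.End ℝ RH3))
    (hss₂ : Module.End.IsSemisimple (D₂.toLinearMap : Module.End ℝ RH3))
    (hc₁ : LinearMap.charpoly D₁.toLinearMap = X ^ 3 * (X - 1))
    (hc₂ : LinearMap.charpoly D₂.toLinearMap = X ^ 3 * (X - 1)) :
    D₁ = D₂ := by
  have hP := Module.End.isIdempotentElem_of_isSemisimple_of_charpoly_eq hss₁ hc₁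
  have hQ := Module.End.isIdempotentElem_of_isSemisimple_of_charpoly_eq hss₂ hc₂
  have htrP := Module.End.trace_eq_one_of_charpoly_eq hc₁
  have htrQ := Module.End.trace_eq_one_of_charpoly_eq hc₂
  obtain ⟨h₁e₃, h₁e₄⟩ := RH3.apply_e₃_eq_zero_and_snd_apply_e₄_eq_one D₁ hP htrP
  obtain ⟨-, h₂e₄⟩ := RH3.apply_e₃_eq_zero_and_snd_apply_e₄_eq_one D₂ hQ htrQ
  have hne : D₁.toLinearMap * D₂.toLinearMap ≠ 0 := fun h => by
    have h₁₂ : D₁ (D₂ RH3.e₄) = D₁ RH3.e₄ := by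
      rw [RH3.apply_e₄ D₂, map_add, map_smul, map_smul, h₁e₃, h₂e₄, smul_zero, one_smul, zero_add]
    have h₀ : D₁ (D₂ RH3.e₄) = 0 := by simpa using LinearMap.congr_fun h RH3.e₄
    simpa [h₀, h₁e₄] using congrArg Prod.snd h₁₂
  exact LieDerivation.ext <| LinearMap.congr_fun <|
    Module.End.eq_of_commute_of_finrank_range_eq_one hP hQ
      (Module.End.finrank_range_eq_one_of_trace_eq_one hP htrP)
      (Module.End.finrank_range_eq_one_of_trace_eq_one hQ htrQ) hcomm hne
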